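/- In the dummy-adversary game, the user's optimal policy coincides with the optimal policy of the underlying MDP: let (S, A, P, r, γ) be a finite MDP with γ ∈ [0,1) and optimal Q-function Q*, let b_1,…,b_N ∈ ℝ, and let Q*_game be the unique fixed point of the dummy-adversary game Bellman operator (maxmin version). Then for every state s ∈ S, { a ∈ A : min_{i} Q*_game(s,a,i) = max_{a'∈A} min_{i} Q*_game(s,a',i) } = { a ∈ A : Q*(s,a) = max_{a'∈A} Q*(s,a') }; that is, the dummy adversary's actions do not alter the user's set of optimal greedy actions. -/

import Mathlib

/-- Maximum of a real-valued function over a nonempty finite type. -/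
noncomputable def fsup {β : Type*} [Fintype β] [Nonempty β] (f : β → ℝ) : ℝ :=
  Finset.univ.sup' Finset.univ_nonempty f

/-- Minimum of a real-valued function over a nonempty finite type. -/
noncomputable def finf {β : Type*} [Fintype β] [Nonempty β] (f : β → ℝ) : ℝ :=
  Finset.univ.inf' Finset.univ_nonempty f

/-- The Bellman optimality operator of a finite MDP. -/
noncomputable def bellman {S A : Type*} [Fintype S] [Nonempty S] [Fintype A] [Nonempty A]
    (P : S → A → S → ℝ) (r : S → A → S → ℝ) (γ : ℝ) (Q : S → A → ℝ) : S → A → ℝ :=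
  fun s a => ∑ s', P s a s' * (r s a s' + γ * fsup (fun a' => Q s' a'))

/-- The dummy-adversary game Bellman operator (maxmin version) with constant shifts
`b i`. -/
noncomputable def daqBellman {S A : Type*} [Fintype S] [Nonempty S] [Fintype A] [Nonempty A]
    {N : ℕ} [NeZero N]
    (P : S → A → S → ℝ) (r : S → A → S → ℝ) (γ : ℝ) (b : Fin N → ℝ)
    (Q : S → A → Fin N → ℝ) : S → A → Fin N → ℝ :=
  fun s a i => ∑ s', P s a s' *
    (r s a s' + b i + γ * fsup (fun a' => finf (fun j => Q s' a' j)))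

/-!
Write `m = min_i b_i`. Since every row of `P` sums to one, the constant `b_i` passes through
the game operator unchanged, so `h(s,a) = min_i Q*_game(s,a,i)` satisfies `h = T h + m`.
Because `T (h - k) = T h - γ k`, the shift `h - m / (1 - γ)` is a fixed point of the MDP
Bellman operator `T`, which is a `γ`-contraction; hence `h = Q* + m / (1 - γ)`, and
shifting by a constant does not change the set of maximisers.
-/

open Finset

lemma sum_mul_add_const_of_sum_eq_one {β : Type*} [Fintype β] {p : β → ℝ} (hp : ∑ x, p x = 1)
    (f : β → ℝ) (c : ℝ) :
    ∑ x, p x * (f x + c) = ∑ x, p x * f x + c := by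
  simp only [mul_add, sum_add_distrib, ← sum_mul, hp, one_mul]

section Extrema

variable {β : Type*} [Fintype β] [Nonempty β]

lemma fsup_add_const (f : β → ℝ) (c : ℝ) : fsup (fun x => f x + c) = fsup f + c :=
  (Finset.sup'_add _ f c _).symm

lemma finf_add_const (f : β → ℝ) (c : ℝ) : finf (fun x => f x + c) = finf f + c :=
  (map_finset_inf' (OrderIso.addRight c) _ f).symm

lemma fsup_le_fsup_add_dist (f g : β → ℝ) : fsup f ≤ fsup g + dist f g :=
  sup'_le _ _ fun x _ => calc
    f x ≤ g x + dist f g := by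
      have hx := dist_le_pi_dist f g x
      rw [Real.dist_eq] at hx
      linarith [le_abs_self (f x - g x)]
    _ ≤ fsup g + dist f g := add_le_add_left (le_sup' g (mem_univ x)) _

lemma dist_fsup_le (f g : β → ℝ) : dist (fsup f) (fsup g) ≤ dist f g := by
  rw [Real.dist_eq, abs_sub_le_iff]
  constructor <;> linarith [fsup_le_fsup_add_dist f g, fsup_le_fsup_add_dist g f, dist_comm f g]

end Extrema

section Bellman

variable {S A : Type*} [Fintype S] [Nonempty S] [Fintype A] [Nonempty A]
  {P : S → A → S → ℝ} (r : S → A → S → ℝ) {γ : ℝ}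

lemma bellman_add_const (hP1 : ∀ s a, ∑ s', P s a s' = 1) (Q : S → A → ℝ) (c : ℝ) :
    bellman P r γ (fun s a => Q s a + c) = fun s a => bellman P r γ Q s a + γ * c := by
  funext s a
  simp only [bellman, fsup_add_const, mul_add γ, ← add_assoc,
    sum_mul_add_const_of_sum_eq_one (hP1 s a)]

lemma dist_bellman_le (hP0 : ∀ s a s', 0 ≤ P s a s') (hP1 : ∀ s a, ∑ s', P s a s' = 1)
    (hγ : 0 ≤ γ) (Q Q' : S → A → ℝ) :
    dist (bellman P r γ Q) (bellman P r γ Q') ≤ γ * dist Q Q' := by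
  have hd := mul_nonneg hγ (dist_nonneg (x := Q) (y := Q'))
  refine (dist_pi_le_iff hd).2 fun s => (dist_pi_le_iff hd).2 fun a => ?_
  have hdiff : bellman P r γ Q s a - bellman P r γ Q' s a
      = ∑ s', P s a s' * (γ * (fsup (Q s') - fsup (Q' s'))) := by
    simp only [bellman, ← sum_sub_distrib]
    exact sum_congr rfl fun _ _ => by ring
  calc dist (bellman P r γ Q s a) (bellman P r γ Q' s a)
      = |∑ s', P s a s' * (γ * (fsup (Q s') - fsup (Q' s')))| := by rw [Real.dist_eq, hdiff]
    _ ≤ ∑ s', |P s a s' * (γ * (fsup (Q s') - fsup (Q' s')))| := abs_sum_le_sum_abs _ _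
    _ ≤ ∑ s', P s a s' * (γ * dist Q Q') := by
      refine sum_le_sum fun s' _ => ?_
      rw [abs_mul, abs_mul, abs_of_nonneg (hP0 s a s'), abs_of_nonneg hγ, ← Real.dist_eq]
      gcongr
      · exact hP0 s a s'
      · exact (dist_fsup_le _ _).trans (dist_le_pi_dist Q Q' s')
    _ = γ * dist Q Q' := by rw [← sum_mul, hP1, one_mul]

lemma bellman_contractingWith (hP0 : ∀ s a s', 0 ≤ P s a s') (hP1 : ∀ s a, ∑ s', P s a s' = 1)
    (hγ : γ ∈ Set.Ico (0 : ℝ) 1) :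
    ContractingWith ⟨γ, hγ.1⟩ (bellman P r γ) :=
  ⟨hγ.2, LipschitzWith.of_dist_le_mul fun Q Q' => dist_bellman_le r hP0 hP1 hγ.1 Q Q'⟩

variable {N : ℕ} [NeZero N]

lemma daqBellman_apply (hP1 : ∀ s a, ∑ s', P s a s' = 1) (b : Fin N → ℝ)
    (Q : S → A → Fin N → ℝ) (s : S) (a : A) (i : Fin N) :
    daqBellman P r γ b Q s a i = bellman P r γ (fun s a => finf (Q s a)) s a + b i := by
  simp only [daqBellman, bellman, add_right_comm (r s a _) (b i),
    sum_mul_add_const_of_sum_eq_one (hP1 s a)]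

lemma finf_daqBellman (hP1 : ∀ s a, ∑ s', P s a s' = 1) (b : Fin N → ℝ)
    (Q : S → A → Fin N → ℝ) (s : S) (a : A) :
    finf (daqBellman P r γ b Q s a) = bellman P r γ (fun s a => finf (Q s a)) s a + finf b := by
  have hshift : daqBellman P r γ b Q s a
      = fun i => b i + bellman P r γ (fun s a => finf (Q s a)) s a :=
    funext fun i => (daqBellman_apply r hP1 b Q s a i).trans (add_comm _ _)
  rw [hshift, finf_add_const, add_comm]

/-- The shift `m / (1 - γ)` with `m = min_i b i` is the discounted value of receiving the
worst bonus `m` at every step. -/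
lemma isFixedPt_bellman_finf_sub_of_daqBellman (hP1 : ∀ s a, ∑ s', P s a s' = 1) (hγ : γ ≠ 1)
    {b : Fin N → ℝ} {Q : S → A → Fin N → ℝ} (hQ : daqBellman P r γ b Q = Q) :
    Function.IsFixedPt (bellman P r γ) fun s a => finf (Q s a) - finf b / (1 - γ) := by
  simp_rw [Function.IsFixedPt, sub_eq_add_neg, bellman_add_const r hP1]
  funext s a
  conv_rhs => rw [← hQ, finf_daqBellman r hP1]
  linear_combination div_mul_cancel₀ (finf b) (sub_ne_zero.2 (Ne.symm hγ))

end Bellman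

/-- In the dummy-adversary game, the user's set of optimal greedy actions at every
state coincides with the set of greedy actions of the underlying MDP: the dummy
adversary's actions do not alter the user's optimal policy. -/
theorem daq_game_greedy_actions_eq_mdp_greedy_actions
    {S A : Type*} [Fintype S] [Nonempty S] [Fintype A] [Nonempty A]
    {N : ℕ} [NeZero N]
    (P : S → A → S → ℝ) (hP0 : ∀ s a s', 0 ≤ P s a s')
    (hP1 : ∀ s a, ∑ s', P s a s' = 1)
    (r : S → A → S → ℝ) (γ : ℝ) (hγ : γ ∈ Set.Ico (0 : ℝ) 1)
    (b : Fin N → ℝ)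
    (Qstar : S → A → ℝ) (hQstar : bellman P r γ Qstar = Qstar)
    (Qgame : S → A → Fin N → ℝ) (hQgame : daqBellman P r γ b Qgame = Qgame) :
    ∀ s : S,
      {a : A | finf (fun i => Qgame s a i) =
        fsup (fun a' => finf (fun i => Qgame s a' i))} =
      {a : A | Qstar s a = fsup (fun a' => Qstar s a')} := by
  have hQ := (bellman_contractingWith r hP0 hP1 hγ).fixedPoint_unique'
    (isFixedPt_bellman_finf_sub_of_daqBellman r hP1 hγ.2.ne hQgame) hQstar
  have hmin : ∀ s a, finf (fun i => Qgame s a i) = Qstar s a + finf b / (1 - γ) := fun s a => by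
    linarith [congrFun (congrFun hQ s) a]
  intro s
  ext a
  simp only [Set.mem_ofPred_eq, hmin, fsup_add_const, add_left_inj]
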